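/- For every integer n ≥ 3, ∂_n(A_{0,1}) = z_{n-1}²; consequently (∂_{n-1} ∘ ∂_n)(A_{1,2}) = z_{n-1}² ≠ 1 = (∂_{n-1} ∘ d_1)(A_{1,2}), so ∂_{n-1} ∘ ∂_n ≠ ∂_{n-1} ∘ d_1 as maps P_n → P_{n-2} (disproving that the pure braid groups with these face maps form a Delta-group). -/

import Mathlib

namespace Braids

/-- The braid relations on the generators `σ_1, …, σ_{n-1}` (indexed by `Fin (n-1)`). -/
def braidRels (n : ℕ) : Set (FreeGroup (Fin (n - 1))) :=
  {r | (∃ i j : Fin (n - 1), (i : ℕ) + 1 = (j : ℕ) ∧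
          r = .of i * .of j * .of i * (.of j * .of i * .of j)⁻¹) ∨
       (∃ i j : Fin (n - 1), (i : ℕ) + 2 ≤ (j : ℕ) ∧
          r = .of i * .of j * (.of j * .of i)⁻¹)}

/-- The Artin braid group on `n` strands, presented by generators and the braid relations. -/
abbrev BraidGroup (n : ℕ) := PresentedGroup (braidRels n)

/-- The Artin generator `σ_{i+1}` (0-indexed). -/
def σ {n : ℕ} (i : Fin (n - 1)) : BraidGroup n := PresentedGroup.of i

/-- The transposition `(i, i+1)` associated to the generator `σ`. -/
def swapGen (n : ℕ) (i : Fin (n - 1)) : Equiv.Perm (Fin n) :=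
  Equiv.swap ⟨i.1, by have := i.2; omega⟩ ⟨i.1 + 1, by have := i.2; omega⟩

private lemma swap_braid {α : Type*} [DecidableEq α] {a b c : α}
    (hab : a ≠ b) (hac : a ≠ c) (hbc : b ≠ c) :
    Equiv.swap a b * Equiv.swap b c * Equiv.swap a b =
      Equiv.swap b c * Equiv.swap a b * Equiv.swap b c := by
  have h1 := Equiv.swap_apply_apply (Equiv.swap a b) b c
  rw [Equiv.swap_apply_right, Equiv.swap_apply_of_ne_of_ne hac.symm hbc.symm,
    Equiv.swap_inv] at h1
  have h2 := Equiv.swap_apply_apply (Equiv.swap b c) a b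
  rw [Equiv.swap_apply_of_ne_of_ne hab hac, Equiv.swap_apply_left, Equiv.swap_inv] at h2
  rw [← h1, ← h2]

private lemma swap_commute {α : Type*} [DecidableEq α] {a b c d : α}
    (hca : c ≠ a) (hcb : c ≠ b) (hda : d ≠ a) (hdb : d ≠ b) :
    Equiv.swap a b * Equiv.swap c d = Equiv.swap c d * Equiv.swap a b := by
  have h := Equiv.swap_apply_apply (Equiv.swap a b) c d
  rw [Equiv.swap_apply_of_ne_of_ne hca hcb, Equiv.swap_apply_of_ne_of_ne hda hdb,
    Equiv.swap_inv] at h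
  nth_rewrite 1 [h]
  rw [← mul_assoc, ← mul_assoc, Equiv.swap_mul_self, one_mul]

theorem braidRels_hold (n : ℕ) :
    ∀ r ∈ braidRels n, FreeGroup.lift (swapGen n) r = 1 := by
  rintro r (⟨i, j, hij, rfl⟩ | ⟨i, j, hij, rfl⟩) <;>
    simp only [map_mul, map_inv, FreeGroup.lift_apply_of, mul_inv_eq_one]
  · have hj : swapGen n j =
        Equiv.swap (⟨i.1 + 1, by have := i.2; have := j.2; omega⟩ : Fin n)
          ⟨i.1 + 2, by have := j.2; omega⟩ := by
      unfold swapGen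
      congr 1 <;> simp only [Fin.mk.injEq] <;> omega
    rw [hj]
    exact swap_braid (by simp only [ne_eq, Fin.mk.injEq]; omega)
      (by simp only [ne_eq, Fin.mk.injEq]; omega) (by simp only [ne_eq, Fin.mk.injEq]; omega)
  · exact swap_commute (by simp only [ne_eq, Fin.mk.injEq]; omega)
      (by simp only [ne_eq, Fin.mk.injEq]; omega) (by simp only [ne_eq, Fin.mk.injEq]; omega)
      (by simp only [ne_eq, Fin.mk.injEq]; omega)

/-- The canonical projection from the braid group to the symmetric group,
sending `σ_i` to the transposition `(i, i+1)`. -/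
def toPerm (n : ℕ) : BraidGroup n →* Equiv.Perm (Fin n) :=
  PresentedGroup.toGroup (braidRels_hold n)

/-- The pure braid group on `n` strands, as a subgroup of the braid group. -/
def PureBraid (n : ℕ) : Subgroup (BraidGroup n) := (toPerm n).ker

/-- The pure braid group `P n` as a group. -/
abbrev P (n : ℕ) := ↥(PureBraid n)

/-- The generator `σ_k` (1-indexed, junk value `1` for out-of-range `k`). -/
def sig (n k : ℕ) : BraidGroup n :=
  if h : 1 ≤ k ∧ k ≤ n - 1 then σ ⟨k - 1, by omega⟩ else 1

/-- The conjugating word `σ_{j-1} σ_{j-2} ⋯ σ_{i+1}`. -/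
def chain (n i j : ℕ) : BraidGroup n :=
  (((List.range (j - i - 1)).map (fun t => sig n (j - 1 - t))).prod)

/-- The pure braid generator `A_{i,j} = σ_{j-1} ⋯ σ_{i+1} σ_i² σ_{i+1}⁻¹ ⋯ σ_{j-1}⁻¹`
(for `1 ≤ i < j ≤ n`; junk values otherwise), as an element of the braid group. -/
def Agen (n i j : ℕ) : BraidGroup n := chain n i j * (sig n i) ^ 2 * (chain n i j)⁻¹

theorem toPerm_sig_sq (n k : ℕ) : (toPerm n (sig n k)) ^ 2 = 1 := by
  unfold sig
  split
  · show (toPerm n (PresentedGroup.of _)) ^ 2 = 1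
    rw [toPerm, PresentedGroup.toGroup.of]
    simp [swapGen, sq, Equiv.swap_mul_self]
  · simp

theorem Agen_mem (n i j : ℕ) : Agen n i j ∈ PureBraid n := by
  have : toPerm n (Agen n i j) = 1 := by
    unfold Agen
    rw [map_mul, map_mul, map_inv, map_pow, toPerm_sig_sq, mul_one, mul_inv_cancel]
  exact this

/-- `A_{i,j}` extended symmetrically: `A_{j,i} := A_{i,j}` and `A_{i,i} := 1`. -/
def ASym (n i j : ℕ) : BraidGroup n := if i = j then 1 else Agen n (min i j) (max i j)

theorem ASym_mem (n i j : ℕ) : ASym n i j ∈ PureBraid n := by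
  unfold ASym
  split
  · exact one_mem _
  · exact Agen_mem n _ _

/-- `A_{0,j} := (A_{1,j} A_{2,j} ⋯ A_{n,j})⁻¹`, as an element of the braid group. -/
def A0gen (n j : ℕ) : BraidGroup n :=
  (((List.range n).map (fun t => ASym n (t + 1) j)).prod)⁻¹

theorem A0gen_mem (n j : ℕ) : A0gen n j ∈ PureBraid n := by
  refine inv_mem (list_prod_mem ?_)
  intro x hx
  simp only [List.mem_map] at hx
  obtain ⟨t, -, rfl⟩ := hx
  exact ASym_mem n _ _

/-- The pure braid generator `A_{i,j}` (with the conventions `A_{j,i} = A_{i,j}`, `A_{i,i} = 1`),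
as an element of the pure braid group. -/
def A (n i j : ℕ) : P n := ⟨ASym n i j, ASym_mem n i j⟩

/-- The element `A_{0,j} = (A_{1,j} A_{2,j} ⋯ A_{n,j})⁻¹` of the pure braid group. -/
def A₀ (n j : ℕ) : P n := ⟨A0gen n j, A0gen_mem n j⟩

/-- The full twist `z_n = A_{1,2} (A_{1,3} A_{2,3}) ⋯ (A_{1,n} A_{2,n} ⋯ A_{n-1,n})`. -/
def fullTwist (n : ℕ) : P n :=
  (((List.range (n - 1)).map
    (fun jt => ((List.range (jt + 1)).map (fun it => A n (it + 1) (jt + 2))).prod)).prod)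

/-- The reindexing map associated with removing the `k`-th strand. -/
def phi (k m : ℕ) : ℕ := if m < k then m else m - 1

/-- `d` is the `k`-th strand-removal homomorphism `P n → P (n-1)`: it is determined by
`d (A_{i,j}) = 1` if `k ∈ {i, j}`, and `d (A_{i,j}) = A_{φ(i),φ(j)}` otherwise. -/
def IsStrandRemoval (n k : ℕ) (d : P n →* P (n - 1)) : Prop :=
  ∀ i j : ℕ, 1 ≤ i → i < j → j ≤ n →
    d (A n i j) = if k = i ∨ k = j then 1 else A (n - 1) (phi k i) (phi k j)

/-- The Brunnian subgroup `Brun_n = ∩_{k=1}^n Ker (d_k)`, for a family `d` of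
strand-removal homomorphisms. -/
def Brunnian (n : ℕ) (d : ℕ → (P n →* P (n - 1))) : Subgroup (P n) :=
  ⨅ k ∈ Finset.Icc 1 n, (d k).ker

/-- `θ` is the automorphism `θ_n` of `P n`: it fixes `A_{i,j}` for `2 ≤ i < j ≤ n` and sends
`A_{1,j}` to `A_{1,j}⁻¹ A_{0,j} A_{1,j}`. -/
def IsTheta (n : ℕ) (θ : MulAut (P n)) : Prop :=
  (∀ i j : ℕ, 2 ≤ i → i < j → j ≤ n → θ (A n i j) = A n i j) ∧
  (∀ j : ℕ, 1 < j → j ≤ n → θ (A n 1 j) = (A n 1 j)⁻¹ * A₀ n j * A n 1 j)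

/-- The homomorphism `∂_n := d_1 ∘ θ_n : P n → P (n-1)`. -/
def del (n : ℕ) (d : ℕ → (P n →* P (n - 1))) (θ : MulAut (P n)) : P n →* P (n - 1) :=
  (d 1).comp θ.toMonoidHom

/-- `Z_n := Brun_n ∩ Ker ∂_n`. -/
def Zgrp (n : ℕ) (d : ℕ → (P n →* P (n - 1))) (θ : MulAut (P n)) : Subgroup (P n) :=
  Brunnian n d ⊓ (del n d θ).ker

/-- `Bd_n := ∂_{n+1}(Brun_{n+1})`, built from strand-removal data on `n+1` strands. -/
def Bd (n : ℕ) (D : ℕ → (P (n + 1) →* P n)) (Θ : MulAut (P (n + 1))) : Subgroup (P n) :=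
  Subgroup.map (del (n + 1) D Θ) (Brunnian (n + 1) D)

/-- `w` is the automorphism `w_n` of `P n`: it fixes `A_{i,j}` for `1 ≤ i < j ≤ n-1` and sends
`A_{i,n}` to `A_{i,n} A_{0,i} A_{i,n}⁻¹` for `1 ≤ i ≤ n-1`. -/
def IsW (n : ℕ) (w : MulAut (P n)) : Prop :=
  (∀ i j : ℕ, 1 ≤ i → i < j → j ≤ n - 1 → w (A n i j) = A n i j) ∧
  (∀ i : ℕ, 1 ≤ i → i ≤ n - 1 → w (A n i n) = A n i n * A₀ n i * (A n i n)⁻¹)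


/-! Since `d_1` kills every `A_{1,j}` and `θ_n` only conjugates `A_{0,j}` by `A_{1,j}`,
`∂_n(A_{1,j+1}) = A_{0,j}` in `P_{n-1}`; hence `∂_n(A_{0,1}) = (A_{0,1} ⋯ A_{0,m})⁻¹ = F_m ⋯ F_1`
with `m = n - 1` and `F_j = A_{1,j} ⋯ A_{m,j}`.

Write `F_j = U_j V_j` with `U_j = A_{1,j} ⋯ A_{j-1,j}` and `V_j = A_{j,j+1} ⋯ A_{j,m}`. The
recursions `U_{k+1} = σ_k U_k σ_k` and `V_j = σ_j V_{j+1} σ_j`, together with the braid relation,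
show that `F_j` commutes with `σ_c` for `j < c < m` and `U_m` with `σ_c` for `c ≤ m - 2`. The first
fact lets the last column `A_{1,m}, …, A_{m-1,m}` be collected on the right, so by induction
`F_m ⋯ F_1 = U_m z_{m-1}² U_m`, and the second gives `U_m z_{m-1}² U_m = (z_{m-1} U_m)² = z_m²`.
Finally `z_m² ≠ 1` because the exponent sum of `z_m` is positive. -/

theorem commute_sandwich_of_braid {M : Type*} [Monoid M] {s t w : M}
    (hst : s * t * s = t * s * t) (hw : Commute w s) : Commute (s * t * w * t * s) t := by
  calc s * t * w * t * s * t = s * t * w * (t * s * t) := by simp only [mul_assoc]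
    _ = s * t * (w * s) * t * s := by rw [← hst]; simp only [mul_assoc]
    _ = (s * t * s) * w * t * s := by rw [hw.eq]; simp only [mul_assoc]
    _ = t * (s * t * w * t * s) := by rw [hst]; simp only [mul_assoc]

theorem conj_sq_eq_of_braid {G : Type*} [Group G] {s t : G} (h : s * t * s = t * s * t) :
    t * s ^ 2 * t⁻¹ = s⁻¹ * t ^ 2 * s := by
  have hconj : t * s * t⁻¹ = s⁻¹ * t * s := by
    calc t * s * t⁻¹ = s⁻¹ * (s * t * s) * t⁻¹ := by group
      _ = s⁻¹ * t * s := by rw [h]; group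
  calc t * s ^ 2 * t⁻¹ = (t * s * t⁻¹) ^ 2 := by simp only [sq]; group
    _ = s⁻¹ * t ^ 2 * s := by rw [hconj]; simp only [sq]; group

section BraidWords

variable {N : ℕ}

lemma sig_eq_one {c : ℕ} (h : ¬ (1 ≤ c ∧ c ≤ N - 1)) : sig N c = 1 := dif_neg h

lemma sig_zero : sig N 0 = 1 := sig_eq_one (by omega)

lemma sig_braid {c : ℕ} (hc : 1 ≤ c) (hcN : c + 2 ≤ N) :
    sig N c * sig N (c + 1) * sig N c = sig N (c + 1) * sig N c * sig N (c + 1) := by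
  rw [sig, sig, dif_pos ⟨hc, by omega⟩, dif_pos ⟨by omega, by omega⟩]
  exact PresentedGroup.mk_eq_mk_of_mul_inv_mem (Or.inl ⟨_, _, by simp; omega, rfl⟩)

lemma sig_commute {c e : ℕ} (h : c + 2 ≤ e) : Commute (sig N c) (sig N e) := by
  by_cases hc : 1 ≤ c ∧ c ≤ N - 1
  · by_cases he : 1 ≤ e ∧ e ≤ N - 1
    · rw [sig, sig, dif_pos hc, dif_pos he]
      exact PresentedGroup.mk_eq_mk_of_mul_inv_mem (Or.inr ⟨_, _, by simp; omega, rfl⟩)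
    · rw [sig_eq_one he]; exact Commute.one_right _
  · rw [sig_eq_one hc]; exact Commute.one_left _

lemma chain_succ {i k : ℕ} (h : i < k) : chain N i (k + 1) = sig N k * chain N i k := by
  rw [chain, show k + 1 - i - 1 = k - i - 1 + 1 by omega, List.prod_range_succ']
  congr 2
  refine List.map_congr_left fun t _ => ?_
  congr 1
  omega

lemma chain_eq_chain_mul_sig {i k : ℕ} (h : i + 2 ≤ k) :
    chain N i k = chain N (i + 1) k * sig N (i + 1) := by
  rw [chain, show k - i - 1 = k - (i + 1) - 1 + 1 by omega, List.prod_range_succ]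
  congr 3
  omega

lemma Agen_succ_right {i k : ℕ} (h : i < k) :
    Agen N i (k + 1) = sig N k * Agen N i k * (sig N k)⁻¹ := by
  simp only [Agen, chain_succ h]
  group

lemma Agen_self_succ (k : ℕ) : Agen N k (k + 1) = sig N k ^ 2 := by
  simp [Agen, chain]

lemma commute_Agen_of_commute_sig {x : BraidGroup N} {a b : ℕ} (hab : a < b)
    (h : ∀ c, a ≤ c → c < b → Commute x (sig N c)) : Commute x (Agen N a b) := by
  have hchain : Commute x (chain N a b) := by
    refine Commute.list_prod_right _ _ fun y hy => ?_
    obtain ⟨t, ht, rfl⟩ := List.mem_map.mp hy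
    exact h _ (by rw [List.mem_range] at ht; omega) (by omega)
  exact (hchain.mul_right ((h a le_rfl hab).pow_right 2)).mul_right hchain.inv_right

lemma Agen_eq_conj_Agen_succ_left {j k : ℕ} (hj : 1 ≤ j) (hjk : j + 2 ≤ k) (hk : k ≤ N) :
    Agen N j k = (sig N j)⁻¹ * Agen N (j + 1) k * sig N j := by
  have hC : Commute (chain N (j + 1) k) (sig N j) :=
    Commute.list_prod_left _ _ fun y hy => by
      obtain ⟨u, hu, rfl⟩ := List.mem_map.mp hy
      exact (sig_commute (by rw [List.mem_range] at hu; omega)).symm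
  calc Agen N j k
      = chain N (j + 1) k * (sig N (j + 1) * sig N j ^ 2 * (sig N (j + 1))⁻¹) *
          (chain N (j + 1) k)⁻¹ := by rw [Agen, chain_eq_chain_mul_sig hjk]; group
    _ = (chain N (j + 1) k * (sig N j)⁻¹) * sig N (j + 1) ^ 2 *
          (sig N j * (chain N (j + 1) k)⁻¹) := by
        rw [conj_sq_eq_of_braid (sig_braid hj (by omega))]; group
    _ = (sig N j)⁻¹ * Agen N (j + 1) k * sig N j := by
        rw [hC.inv_right.eq, ← hC.inv_left.eq, Agen]; group

def lowerProd (N k : ℕ) : BraidGroup N :=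
  ((List.range (k - 1)).map fun t => Agen N (t + 1) k).prod

def upperProd (N j m : ℕ) : BraidGroup N :=
  ((List.range (m - j)).map fun t => Agen N j (j + 1 + t)).prod

lemma lowerProd_succ {k : ℕ} (hk : 1 ≤ k) :
    lowerProd N (k + 1) = sig N k * lowerProd N k * sig N k := by
  obtain ⟨k, rfl⟩ : ∃ k', k = k' + 1 := ⟨k - 1, by omega⟩
  have hconj : ((List.range k).map fun t => Agen N (t + 1) (k + 1 + 1)).prod =
      MulAut.conj (sig N (k + 1)) (lowerProd N (k + 1)) := by
    rw [lowerProd, map_list_prod, List.map_map]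
    exact congrArg _ (List.map_congr_left fun t ht => Agen_succ_right (by simpa using ht))
  rw [lowerProd, show k + 1 + 1 - 1 = k + 1 from rfl, List.prod_range_succ, hconj,
    Agen_self_succ, MulAut.conj_apply]
  group

lemma upperProd_self (j : ℕ) : upperProd N j j = 1 := by
  simp [upperProd]

lemma upperProd_succ_right {j m : ℕ} (h : j ≤ m) :
    upperProd N j (m + 1) = upperProd N j m * Agen N j (m + 1) := by
  rw [upperProd, show m + 1 - j = m - j + 1 by omega, List.prod_range_succ,
    show j + 1 + (m - j) = m + 1 by omega, upperProd]

lemma upperProd_eq_sig_mul_mul_sig {j m : ℕ} (hj : 1 ≤ j) (hjm : j < m) (hm : m ≤ N) :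
    upperProd N j m = sig N j * upperProd N (j + 1) m * sig N j := by
  have hconj : ((List.range (m - j - 1)).map fun t => Agen N j (j + 1 + (t + 1))).prod =
      MulAut.conj (sig N j)⁻¹ (upperProd N (j + 1) m) := by
    rw [upperProd, map_list_prod, List.map_map, Nat.sub_sub]
    refine congrArg _ (List.map_congr_left fun t ht => ?_)
    simp only [Function.comp_apply, MulAut.conj_apply, inv_inv]
    rw [Agen_eq_conj_Agen_succ_left hj (by omega) (by rw [List.mem_range] at ht; omega),
      show j + 1 + (t + 1) = j + 1 + 1 + t by omega]
  rw [upperProd, show m - j = m - j - 1 + 1 by omega, List.prod_range_succ', hconj,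
    add_zero, Agen_self_succ, MulAut.conj_apply]
  group

lemma Agen_commute_sig {a b c : ℕ} (hab : a < b) (h : c + 2 ≤ a ∨ b + 1 ≤ c) :
    Commute (Agen N a b) (sig N c) := by
  refine (commute_Agen_of_commute_sig hab fun e hae heb => ?_).symm
  rcases h with h | h
  · exact sig_commute (by omega)
  · exact (sig_commute (by omega)).symm

lemma lowerProd_commute_sig_of_lt {k c : ℕ} (h : k < c) : Commute (lowerProd N k) (sig N c) :=
  Commute.list_prod_left _ _ fun y hy => by
    obtain ⟨t, ht, rfl⟩ := List.mem_map.mp hy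
    rw [List.mem_range] at ht
    exact Agen_commute_sig (by omega) (Or.inr (by omega))

lemma upperProd_commute_sig_of_add_two_le {j m c : ℕ} (h : c + 2 ≤ j) :
    Commute (upperProd N j m) (sig N c) :=
  Commute.list_prod_left _ _ fun y hy => by
    obtain ⟨t, -, rfl⟩ := List.mem_map.mp hy
    exact Agen_commute_sig (by omega) (Or.inl h)

lemma lowerProd_commute_sig {k c : ℕ} (hck : c + 2 ≤ k) (hk : k ≤ N) :
    Commute (lowerProd N k) (sig N c) := by
  rcases Nat.eq_zero_or_pos c with rfl | hc
  · rw [sig_zero]; exact Commute.one_right _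
  obtain ⟨i, rfl⟩ : ∃ i, k = c + 2 + i := ⟨k - c - 2, by omega⟩
  induction i with
  | zero =>
    rw [add_zero, lowerProd_succ (by omega), lowerProd_succ hc]
    simp only [← mul_assoc]
    exact commute_sandwich_of_braid (sig_braid hc (by omega)).symm
      (lowerProd_commute_sig_of_lt (by omega))
  | succ i ih =>
    rw [← add_assoc, lowerProd_succ (by omega)]
    have hs : Commute (sig N (c + 2 + i)) (sig N c) := (sig_commute (by omega)).symm
    exact (hs.mul_left (ih (by omega) (by omega))).mul_left hs

lemma upperProd_commute_sig {j m c : ℕ} (hj : 1 ≤ j) (hjc : j < c) (hcm : c < m)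
    (hm : m ≤ N) :
    Commute (upperProd N j m) (sig N c) := by
  obtain ⟨i, rfl⟩ : ∃ i, c = j + 1 + i := ⟨c - j - 1, by omega⟩
  induction i generalizing j with
  | zero =>
    rw [upperProd_eq_sig_mul_mul_sig hj (by omega) hm,
      upperProd_eq_sig_mul_mul_sig (by omega) (by omega) hm, add_zero]
    simp only [← mul_assoc]
    exact commute_sandwich_of_braid (sig_braid hj (by omega))
      (upperProd_commute_sig_of_add_two_le le_rfl)
  | succ i ih =>
    rw [upperProd_eq_sig_mul_mul_sig hj (by omega) hm,
      show j + 1 + (i + 1) = j + 1 + 1 + i by omega]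
    have hs : Commute (sig N j) (sig N (j + 1 + 1 + i)) := sig_commute (by omega)
    exact (hs.mul_left (ih (j := j + 1) (by omega) (by omega) (by omega))).mul_left hs

lemma ASym_self (n i : ℕ) : ASym n i i = 1 := if_pos rfl

lemma ASym_comm (n i j : ℕ) : ASym n i j = ASym n j i := by
  unfold ASym
  by_cases h : i = j
  · subst h; rfl
  · rw [if_neg h, if_neg (Ne.symm h), min_comm, max_comm]

lemma ASym_of_lt {n i j : ℕ} (h : i < j) : ASym n i j = Agen n i j := by
  rw [ASym, if_neg h.ne, min_eq_left h.le, max_eq_right h.le]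

def rowProd (N j m : ℕ) : BraidGroup N :=
  ((List.range m).map fun t => ASym N (t + 1) j).prod

lemma rowProd_succ (j m : ℕ) : rowProd N j (m + 1) = rowProd N j m * ASym N (m + 1) j :=
  List.prod_range_succ _ _

lemma rowProd_eq {j m : ℕ} (hj : 1 ≤ j) (hjm : j ≤ m) :
    rowProd N j m = lowerProd N j * upperProd N j m := by
  induction m, hjm using Nat.le_induction with
  | base =>
    obtain ⟨k, rfl⟩ : ∃ k, j = k + 1 := ⟨j - 1, by omega⟩
    rw [rowProd_succ, ASym_self, upperProd_self, mul_one, mul_one, lowerProd]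
    exact congrArg _ (List.map_congr_left fun t ht => ASym_of_lt (by simpa using ht))
  | succ m hjm ih =>
    rw [rowProd_succ, ih, upperProd_succ_right hjm, ASym_comm, ASym_of_lt (by omega), mul_assoc]

lemma rowProd_self {k : ℕ} (hk : 1 ≤ k) : rowProd N k k = lowerProd N k := by
  rw [rowProd_eq hk le_rfl, upperProd_self, mul_one]

lemma rowProd_commute_Agen {i j k m : ℕ} (hi : 1 ≤ i) (hij : i < j) (hjk : j < k)
    (hkm : k ≤ m) (hm : m ≤ N) : Commute (rowProd N i m) (Agen N j k) := by
  refine commute_Agen_of_commute_sig hjk fun c hjc hck => ?_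
  rw [rowProd_eq hi (by omega)]
  exact (lowerProd_commute_sig_of_lt (by omega)).mul_left
    (upperProd_commute_sig hi (by omega) (by omega) hm)

lemma lowerProd_commute_lowerProd {k m : ℕ} (hkm : k < m) (hm : m ≤ N) :
    Commute (lowerProd N m) (lowerProd N k) :=
  Commute.list_prod_right _ _ fun y hy => by
    obtain ⟨t, ht, rfl⟩ := List.mem_map.mp hy
    rw [List.mem_range] at ht
    exact commute_Agen_of_commute_sig (by omega) fun c _ hc => lowerProd_commute_sig (by omega) hm

def descRowProd (N r m : ℕ) : BraidGroup N :=
  ((List.range r).map fun s => rowProd N (s + 1) m).reverse.prod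

lemma descRowProd_succ (r m : ℕ) :
    descRowProd N (r + 1) m = rowProd N (r + 1) m * descRowProd N r m := by
  simp [descRowProd, List.range_succ]

def twistProd (N m : ℕ) : BraidGroup N :=
  ((List.range m).map fun k => lowerProd N (k + 1)).prod

lemma twistProd_succ (m : ℕ) : twistProd N (m + 1) = twistProd N m * lowerProd N (m + 1) :=
  List.prod_range_succ _ _

lemma descRowProd_succ_right {r m : ℕ} (hrm : r ≤ m) (hm : m + 1 ≤ N) :
    descRowProd N r (m + 1) =
      descRowProd N r m * ((List.range r).map fun t => Agen N (t + 1) (m + 1)).prod := by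
  induction r with
  | zero => simp [descRowProd]
  | succ r ih =>
    have hcomm : Commute (Agen N (r + 1) (m + 1)) (descRowProd N r (m + 1)) :=
      Commute.list_prod_right _ _ fun y hy => by
        obtain ⟨s, hs, rfl⟩ := List.mem_map.mp (List.mem_reverse.mp hy)
        rw [List.mem_range] at hs
        exact (rowProd_commute_Agen (by omega) (by omega) (by omega) le_rfl hm).symm
    rw [descRowProd_succ, rowProd_succ, ASym_comm, ASym_of_lt (by omega), mul_assoc, hcomm.eq,
      ih (by omega), List.prod_range_succ, descRowProd_succ]
    group

lemma descRowProd_self {m : ℕ} (hm : m ≤ N) : descRowProd N m m = twistProd N m ^ 2 := by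
  induction m with
  | zero => simp [descRowProd, twistProd]
  | succ m ih =>
    have hcomm : Commute (lowerProd N (m + 1)) (twistProd N m) :=
      Commute.list_prod_right _ _ fun y hy => by
        obtain ⟨k, hk, rfl⟩ := List.mem_map.mp hy
        rw [List.mem_range] at hk
        exact lowerProd_commute_lowerProd (by omega) hm
    rw [descRowProd_succ, descRowProd_succ_right le_rfl hm, ih (by omega),
      rowProd_self (by omega), twistProd_succ]
    change lowerProd N (m + 1) * (twistProd N m ^ 2 * lowerProd N (m + 1)) = _
    rw [sq, sq, ← mul_assoc, ← mul_assoc, hcomm.eq]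
    group

def exponentSum (N : ℕ) : BraidGroup N →* Multiplicative ℤ :=
  PresentedGroup.toGroup (f := fun _ => Multiplicative.ofAdd 1) (by
    rintro r (⟨i, j, -, rfl⟩ | ⟨i, j, -, rfl⟩) <;>
      simp only [map_mul, map_inv, FreeGroup.lift_apply_of] <;> group)

lemma exponentSum_Agen {i j : ℕ} (hi : 1 ≤ i) (hiN : i ≤ N - 1) :
    exponentSum N (Agen N i j) = Multiplicative.ofAdd 2 := by
  rw [Agen, map_mul, map_mul, map_inv, mul_inv_cancel_comm, map_pow, sig, dif_pos ⟨hi, hiN⟩, σ,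
    exponentSum, PresentedGroup.toGroup.of]
  rfl

end BraidWords

lemma coe_fullTwist (m : ℕ) : (fullTwist m : BraidGroup m) = twistProd m m := by
  have hrow : ∀ k, (((List.range (k + 1)).map fun i => A m (i + 1) (k + 2)).prod : BraidGroup m)
      = lowerProd m (k + 2) := fun k => by
    rw [SubmonoidClass.coe_list_prod, List.map_map, lowerProd]
    exact congrArg _ (List.map_congr_left fun i hi => ASym_of_lt (by simpa using hi))
  rcases m with _ | m
  · rfl
  rw [fullTwist, SubmonoidClass.coe_list_prod, List.map_map, twistProd, List.prod_range_succ',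
    show lowerProd (m + 1) (0 + 1) = 1 from rfl, one_mul]
  exact congrArg _ (List.map_congr_left fun k _ => hrow k)

theorem prod_A₀_inv_eq_fullTwist_sq (m : ℕ) :
    (((List.range m).map fun s => A₀ m (s + 1)).prod)⁻¹ = fullTwist m ^ 2 := by
  apply Subtype.ext
  rw [InvMemClass.coe_inv, SubmonoidClass.coe_list_prod, List.prod_inv_reverse, List.map_map,
    List.map_map, SubmonoidClass.coe_pow, coe_fullTwist, ← descRowProd_self le_rfl]
  exact congrArg _ (congrArg _ (List.map_congr_left fun s _ => inv_inv _))

theorem fullTwist_sq_ne_one {m : ℕ} (hm : 2 ≤ m) : fullTwist m ^ 2 ≠ 1 := by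
  let ε := (exponentSum m).comp (PureBraid m).subtype
  have hA : ∀ i j, 1 ≤ i → i < j → j ≤ m → 1 < ε (A m i j) := fun i j hi hij hjm => by
    change 1 < exponentSum m (ASym m i j)
    rw [ASym_of_lt hij, exponentSum_Agen hi (by omega)]
    exact Multiplicative.ofAdd_lt.mpr two_pos
  have hz : 1 < ε (fullTwist m) := by
    rw [fullTwist, map_list_prod, List.map_map]
    refine List.one_lt_prod_of_one_lt _ (fun x hx => ?_) (by simp; omega)
    obtain ⟨k, hk, rfl⟩ := List.mem_map.mp hx
    rw [List.mem_range] at hk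
    rw [Function.comp_apply, map_list_prod, List.map_map]
    refine List.one_lt_prod_of_one_lt _ (fun y hy => ?_) (by simp)
    obtain ⟨i, hi, rfl⟩ := List.mem_map.mp hy
    rw [List.mem_range] at hi
    exact hA _ _ (by omega) (by omega) (by omega)
  intro h
  exact (one_lt_pow' hz two_ne_zero).ne' (by rw [← map_pow, h, map_one])

lemma A_comm (n i j : ℕ) : A n i j = A n j i := Subtype.ext (ASym_comm n i j)

lemma A_self (n i : ℕ) : A n i i = 1 := Subtype.ext (ASym_self n i)

lemma A₀_eq (n j : ℕ) : A₀ n j = (((List.range n).map fun t => A n (t + 1) j).prod)⁻¹ := by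
  apply Subtype.ext
  rw [InvMemClass.coe_inv, SubmonoidClass.coe_list_prod, List.map_map]
  rfl

namespace IsStrandRemoval

variable {n : ℕ} {d : P n →* P (n - 1)}

lemma apply_A_one (hd : IsStrandRemoval n 1 d) {j : ℕ} (hj : 1 ≤ j) (hjn : j ≤ n) :
    d (A n 1 j) = 1 := by
  rcases hj.eq_or_lt with rfl | hj
  · rw [A_self, map_one]
  · rw [hd 1 j le_rfl hj hjn, if_pos (Or.inl rfl)]

lemma apply_A_succ_succ (hd : IsStrandRemoval n 1 d) {i j : ℕ} (hi : 1 ≤ i) (hj : 1 ≤ j)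
    (hin : i < n) (hjn : j < n) : d (A n (i + 1) (j + 1)) = A (n - 1) i j := by
  have key : ∀ i j, 1 ≤ i → i < j → j < n → d (A n (i + 1) (j + 1)) = A (n - 1) i j :=
    fun i j hi hij hjn => by
      rw [hd (i + 1) (j + 1) (by omega) (by omega) hjn, if_neg (by omega)]
      simp [phi]
  rcases lt_trichotomy i j with hij | rfl | hij
  · exact key i j hi hij hjn
  · rw [A_self, A_self, map_one]
  · rw [A_comm, key j i hj hij hin, A_comm]

lemma apply_A₀ (hd : IsStrandRemoval n 1 d) {j : ℕ} (hj : 1 ≤ j) (hjn : j < n) :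
    d (A₀ n (j + 1)) = A₀ (n - 1) j := by
  obtain ⟨n, rfl⟩ : ∃ n', n = n' + 1 := ⟨n - 1, by omega⟩
  rw [A₀_eq, A₀_eq, map_inv, map_list_prod, List.map_map, List.prod_range_succ',
    Function.comp_apply, zero_add, hd.apply_A_one (by omega) (by omega), one_mul]
  exact congrArg _ (congrArg _ (List.map_congr_left fun t ht =>
    hd.apply_A_succ_succ (by omega) hj (by rw [List.mem_range] at ht; omega) hjn))

end IsStrandRemoval

section Del

variable {n : ℕ} {d : ℕ → (P n →* P (n - 1))} {θ : MulAut (P n)}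

lemma del_A_one (hd : IsStrandRemoval n 1 (d 1)) (hθ : IsTheta n θ) {j : ℕ} (hj : 1 ≤ j)
    (hjn : j < n) : del n d θ (A n 1 (j + 1)) = A₀ (n - 1) j := by
  change d 1 (θ (A n 1 (j + 1))) = _
  rw [hθ.2 (j + 1) (by omega) hjn, map_mul, map_mul, map_inv,
    hd.apply_A_one (by omega) hjn, hd.apply_A₀ hj hjn, inv_one, one_mul, mul_one]

lemma del_A₀_one (hd : IsStrandRemoval n 1 (d 1)) (hθ : IsTheta n θ) :
    del n d θ (A₀ n 1) =
      (((List.range (n - 1)).map fun s => A₀ (n - 1) (s + 1)).prod)⁻¹ := by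
  rcases n with _ | n
  · simp [A₀_eq]
  rw [A₀_eq, map_inv, map_list_prod, List.map_map, List.prod_range_succ', Function.comp_apply,
    A_self, map_one, one_mul]
  exact congrArg _ (congrArg _ (List.map_congr_left fun s hs => by
    rw [Function.comp_apply, A_comm, del_A_one hd hθ (by omega) (by simpa using hs)]))

end Del

/-- For `n ≥ 3`: `∂_n (A_{0,1}) = z_{n-1}²`; consequently
`(∂_n ∘ ∂_{n+1}) (A_{1,2}) = z_{n-1}² ≠ 1 = (∂_n ∘ d_1) (A_{1,2})`, so
`∂_n ∘ ∂_{n+1} ≠ ∂_n ∘ d_1` (disproving the Delta-group identity on the pure braid groups). -/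
theorem del_A0_one_eq_fullTwist_sq (n : ℕ) (hn : 3 ≤ n)
    (d : ℕ → (P n →* P (n - 1)))
    (hd : ∀ k, 1 ≤ k → k ≤ n → IsStrandRemoval n k (d k))
    (θ : MulAut (P n)) (hθ : IsTheta n θ)
    (D : ℕ → (P (n + 1) →* P n))
    (hD : ∀ k, 1 ≤ k → k ≤ n + 1 → IsStrandRemoval (n + 1) k (D k))
    (Θ : MulAut (P (n + 1))) (hΘ : IsTheta (n + 1) Θ)
 :
    del n d θ (A₀ n 1) = (fullTwist (n - 1)) ^ 2 ∧
      del n d θ (del (n + 1) D Θ (A (n + 1) 1 2)) = (fullTwist (n - 1)) ^ 2 ∧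
      (fullTwist (n - 1)) ^ 2 ≠ 1 ∧
      del n d θ (D 1 (A (n + 1) 1 2)) = 1 ∧
      (del n d θ).comp (del (n + 1) D Θ) ≠ (del n d θ).comp (D 1) := by
  have hD1 := hD 1 le_rfl (by omega)
  have hdel : del n d θ (A₀ n 1) = fullTwist (n - 1) ^ 2 := by
    rw [del_A₀_one (hd 1 le_rfl (by omega)) hθ, prod_A₀_inv_eq_fullTwist_sq]
  have hdel' : del (n + 1) D Θ (A (n + 1) 1 2) = A₀ n 1 := del_A_one hD1 hΘ le_rfl (by omega)
  have hD1A : D 1 (A (n + 1) 1 2) = 1 := hD1.apply_A_one (by omega) (by omega)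
  have hne : fullTwist (n - 1) ^ 2 ≠ 1 := fullTwist_sq_ne_one (by omega)
  refine ⟨hdel, by rw [hdel', hdel], hne, by rw [hD1A, map_one], fun h => hne ?_⟩
  have := DFunLike.congr_fun h (A (n + 1) 1 2)
  rwa [MonoidHom.comp_apply, MonoidHom.comp_apply, hdel', hdel, hD1A, map_one] at this

end Braids
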